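/- Let n = 3m with m ≥ 1, let u, v be nonzero real numbers, and let a, b : ZMod n → ℝ. Define a', b' : ZMod n → ℝ by a'_{3j} = u²v·a_{3j}, a'_{3j+1} = (v/u)·a_{3j+1}, a'_{3j+2} = a_{3j+2}/(uv²), and b'_{3j} = (u/v)·b_{3j}, b'_{3j+1} = uv²·b_{3j+1}, b'_{3j+2} = b_{3j+2}/(u²v), for 0 ≤ j < m. Then the matrix products N(a'_0, b'_0)·N(a'_1, b'_1) ⋯ N(a'_{n−1}, b'_{n−1}) and N(a_0, b_0)·N(a_1, b_1) ⋯ N(a_{n−1}, b_{n−1}) are conjugate in GL(3, ℝ); in particular they have equal traces, and their inverses have equal traces. (Hence the trace of the monodromy matrix, and each of its weighted-homogeneous components I_j, J_j, is invariant under the ℝ*×ℝ* action arising from the ambiguity of the lift when n is divisible by 3.) -/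

import Mathlib

/-! Each factor is intertwined with its rescaled version by diagonal matrices:
`N(α', β') D_{i+1} = D_i N(α, β)`, where `D_i` is the diagonal matrix `diag(1, u/v, u²v)` with
its entries rotated `i` times. The rotation has period 3, so for `3 ∣ n` the product telescopes
to `M' D_0 = D_0 M`. -/

noncomputable def Nmat (α β : ℝ) : Matrix (Fin 3) (Fin 3) ℝ :=
  !![0, 0, 1; 1, 0, β; 0, 1, α]

open Fin.NatCast

theorem List.prod_range_map_mul_eq_of_intertwine {R : Type*} [Monoid R] (f g d : ℕ → R)
    (n : ℕ) (h : ∀ i < n, f i * d (i + 1) = d i * g i) :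
    ((List.range n).map f).prod * d n = d 0 * ((List.range n).map g).prod := by
  induction n with
  | zero => simp
  | succ n ih =>
    simp only [List.range_succ, List.map_append, List.prod_append, List.map_cons, List.map_nil,
      List.prod_cons, List.prod_nil, mul_one]
    rw [mul_assoc, h n n.lt_succ_self, ← mul_assoc, ih fun i hi => h i (hi.trans n.lt_succ_self),
      mul_assoc]

theorem Nmat_mul_diagonal_rotate (d : Fin 3 → ℝ) {α β α' β' : ℝ}
    (hα : α' * d 0 = d 2 * α) (hβ : β' * d 0 = d 1 * β) :
    Nmat α' β' * Matrix.diagonal (fun k => d (k + 1)) = Matrix.diagonal d * Nmat α β := by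
  ext i j
  fin_cases i <;> fin_cases j <;> simp [Nmat, Matrix.mul_apply, Fin.sum_univ_three] <;> linarith

noncomputable def rotatedDiagonal (w : Fin 3 → ℝ) (i : ℕ) : Matrix (Fin 3) (Fin 3) ℝ :=
  Matrix.diagonal fun k => w (k + (i : Fin 3))

theorem rotatedDiagonal_succ (w : Fin 3 → ℝ) (i : ℕ) :
    rotatedDiagonal w (i + 1) = Matrix.diagonal fun k => w (k + 1 + (i : Fin 3)) := by
  simp only [rotatedDiagonal, Nat.cast_succ, add_assoc, add_comm (1 : Fin 3)]

theorem rotatedDiagonal_of_three_dvd (w : Fin 3 → ℝ) {n : ℕ} (hn : 3 ∣ n) :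
    rotatedDiagonal w n = rotatedDiagonal w 0 := by
  simp [rotatedDiagonal, Fin.natCast_eq_zero.2 hn]

theorem Nmat_scaled_mul_rotatedDiagonal {u v : ℝ} (hu : u ≠ 0) (hv : v ≠ 0)
    {A B A' B' : ℕ → ℝ} {j : ℕ}
    (h : A' (3 * j) = u ^ 2 * v * A (3 * j) ∧ A' (3 * j + 1) = (v / u) * A (3 * j + 1) ∧
      A' (3 * j + 2) = A (3 * j + 2) / (u * v ^ 2) ∧ B' (3 * j) = (u / v) * B (3 * j) ∧
      B' (3 * j + 1) = u * v ^ 2 * B (3 * j + 1) ∧ B' (3 * j + 2) = B (3 * j + 2) / (u ^ 2 * v))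
    {r : ℕ} (hr : r < 3) :
    Nmat (A' (3 * j + r)) (B' (3 * j + r)) * rotatedDiagonal ![1, u / v, u ^ 2 * v] (3 * j + r + 1)
      = rotatedDiagonal ![1, u / v, u ^ 2 * v] (3 * j + r) * Nmat (A (3 * j + r)) (B (3 * j + r)) := by
  obtain ⟨hA₀, hA₁, hA₂, hB₀, hB₁, hB₂⟩ := h
  rw [rotatedDiagonal_succ, rotatedDiagonal]
  have h3j : ((3 * j : ℕ) : Fin 3) = 0 := by simp
  refine Nmat_mul_diagonal_rotate (fun l => ![1, u / v, u ^ 2 * v] (l + ((3 * j + r : ℕ) : Fin 3)))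
    ?_ ?_ <;> interval_cases r <;>
    simp [h3j, hA₀, hA₁, hA₂, hB₀, hB₁, hB₂] <;> field_simp

theorem Matrix.eq_mul_mul_nonsing_inv_of_mul_eq_mul {ι R : Type*} [Fintype ι] [DecidableEq ι]
    [CommRing R] {M M' P : Matrix ι ι R} (hP : IsUnit P.det) (h : M' * P = P * M) :
    M' = P * M * P⁻¹ := by
  rw [← h, Matrix.mul_nonsing_inv_cancel_right _ _ hP]

theorem Matrix.trace_inv_conj {ι R : Type*} [Fintype ι] [DecidableEq ι] [CommRing R]
    {P : Matrix ι ι R} (hP : IsUnit P.det) (M : Matrix ι ι R) :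
    (P * M * P⁻¹)⁻¹.trace = M⁻¹.trace := by
  rw [Matrix.mul_inv_rev, Matrix.mul_inv_rev, Matrix.nonsing_inv_nonsing_inv P hP, ← mul_assoc,
    Matrix.trace_conj ((Matrix.isUnit_iff_isUnit_det P).2 hP)]

theorem stmt_18 (m : ℕ) (n : ℕ) (hn : n = 3 * m)
    (u v : ℝ) (hu : u ≠ 0) (hv : v ≠ 0)
    (a b a' b' : ZMod n → ℝ)
    (hab' : ∀ j : ℕ, j < m →
      a' ((3 * j : ℕ) : ZMod n) = u ^ 2 * v * a ((3 * j : ℕ) : ZMod n) ∧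
      a' ((3 * j + 1 : ℕ) : ZMod n) = (v / u) * a ((3 * j + 1 : ℕ) : ZMod n) ∧
      a' ((3 * j + 2 : ℕ) : ZMod n) = a ((3 * j + 2 : ℕ) : ZMod n) / (u * v ^ 2) ∧
      b' ((3 * j : ℕ) : ZMod n) = (u / v) * b ((3 * j : ℕ) : ZMod n) ∧
      b' ((3 * j + 1 : ℕ) : ZMod n) = u * v ^ 2 * b ((3 * j + 1 : ℕ) : ZMod n) ∧
      b' ((3 * j + 2 : ℕ) : ZMod n) = b ((3 * j + 2 : ℕ) : ZMod n) / (u ^ 2 * v))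
    (M M' : Matrix (Fin 3) (Fin 3) ℝ)
    (hM : M = (((List.range n).map fun i => Nmat (a (i : ZMod n)) (b (i : ZMod n))).prod))
    (hM' : M' = (((List.range n).map fun i => Nmat (a' (i : ZMod n)) (b' (i : ZMod n))).prod)) :
    ∃ P : Matrix (Fin 3) (Fin 3) ℝ, IsUnit P.det ∧
      M' = P * M * P⁻¹ ∧
      M'.trace = M.trace ∧ M'⁻¹.trace = M⁻¹.trace := by
  set D := rotatedDiagonal ![1, u / v, u ^ 2 * v]
  have hD : IsUnit (D 0).det := by
    simp [D, rotatedDiagonal, Fin.prod_univ_three, hu, hv]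
  have hstep (i : ℕ) (hi : i < n) :
      Nmat (a' i) (b' i) * D (i + 1) = D i * Nmat (a i) (b i) := by
    have h := Nmat_scaled_mul_rotatedDiagonal (A := fun k => a k) (B := fun k => b k)
      (A' := fun k => a' k) (B' := fun k => b' k) hu hv (hab' (i / 3) (by omega))
      (Nat.mod_lt i three_pos)
    rwa [Nat.div_add_mod] at h
  have hintertwine : M' * D 0 = D 0 * M := by
    -- `(i : ZMod n)` in `hM`, `hM'` elaborates as a monadic coercion of the list `List.range n`
    rw [bind_pure_comp, List.map_eq_map, List.map_map] at hM hM'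
    have hwrap : D n = D 0 := rotatedDiagonal_of_three_dvd _ (hn ▸ dvd_mul_right 3 m)
    have h := List.prod_range_map_mul_eq_of_intertwine _ _ D n hstep
    rw [hwrap] at h
    rwa [hM, hM']
  have hconj := Matrix.eq_mul_mul_nonsing_inv_of_mul_eq_mul hD hintertwine
  refine ⟨D 0, hD, hconj, ?_, ?_⟩ <;> rw [hconj]
  · exact Matrix.trace_conj ((Matrix.isUnit_iff_isUnit_det _).2 hD) M
  · exact Matrix.trace_inv_conj hD M
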